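/- For m ≥ 2 and i, j ≥ 0, the product e_i · s_{(m,1^j)} equals \sum_{x=0}^{min(i-1,j)} s_{(m+1,2^x,1^{i+j-1-2x})} + \sum_{x=0}^{min(i,j)} s_{(m,2^x,1^{i+j-2x})}. -/

import Mathlib

/-!
Expand each Jacobi–Trudi determinant along its first row. For `λ = (m, 2^x, 1^(l-1-x))` the
minor complementary to the entry `h_{m+r}` is the minor of the unitriangular Toeplitz matrix
`(h_{b-a})` with rows `x, l` and columns `0, r+1` deleted. By Jacobi's complementary minor theorem it equals a `2 × 2`
minor of the inverse matrix `((-1)^(a+b) e_{b-a})`, namely `e_x e_{l-1-r} - e_{x-r-1} e_l`.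
Both sides of the identity therefore become `∑_r (-1)^r h_{m+r} c_r` (the shapes with first part
`m + 1` after the shift `r ↦ r + 1`), and the coefficients `c_r` agree by a telescoping sum of
products of two `e`'s.
-/

open MvPolynomial Finset

noncomputable section

/-- The ring of symmetric functions, as the free polynomial ring generated by the
complete homogeneous symmetric functions `h₁, h₂, …` (variable `n` is `h_{n+1}`). -/
abbrev SymF := MvPolynomial ℕ ℤ

/-- The complete homogeneous symmetric function `h_n`, with `h_n = 0` for `n < 0`. -/
def hh : ℤ → SymF
  | Int.ofNat 0 => 1
  | Int.ofNat (n+1) => X n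
  | Int.negSucc _ => 0

/-- The Schur function `s_λ` for `λ = (lam 0, lam 1, …, lam (l-1))`, defined by the
Jacobi–Trudi determinant `det (h_{λ_i - i + j})₁≤i,j≤l`. -/
def schur (l : ℕ) (lam : Fin l → ℕ) : SymF :=
  Matrix.det (Matrix.of fun i j : Fin l => hh ((lam i : ℤ) + (j : ℤ) - (i : ℤ)))

/-- The elementary symmetric function `e_n = s_{(1^n)}`. -/
def ee (n : ℕ) : SymF := schur n (fun _ => 1)

/-- The skew Schur function `s_{λ/μ}`, via the Jacobi–Trudi determinant
`det (h_{λ_i - μ_j - i + j})`. -/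
def skewSchur (l : ℕ) (lam mu : Fin l → ℕ) : SymF :=
  Matrix.det (Matrix.of fun i j : Fin l =>
    hh ((lam i : ℤ) - (mu j : ℤ) + (j : ℤ) - (i : ℤ)))

namespace Matrix

variable {R : Type*} [CommRing R]

theorem det_updateCol_single_one {n : ℕ} (M : Matrix (Fin (n + 1)) (Fin (n + 1)) R)
    (r c : Fin (n + 1)) :
    (M.updateCol c (Pi.single r 1)).det =
      (-1) ^ (r + c : ℕ) * (M.submatrix r.succAbove c.succAbove).det := by
  rw [det_succ_column _ c, Fintype.sum_eq_single r fun i hi => by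
    rw [updateCol_self, Pi.single_eq_of_ne hi, mul_zero, zero_mul]]
  simp

theorem submatrix_updateCol_single_one {m n m' n' : Type*} [DecidableEq m] [DecidableEq n]
    [DecidableEq m'] [DecidableEq n'] (A : Matrix m n R) {f : m' → m} {g : n' → n}
    (hf : Function.Injective f) (hg : Function.Injective g) (r : m') (c : n') :
    (A.updateCol (g c) (Pi.single (f r) 1)).submatrix f g =
      (A.submatrix f g).updateCol c (Pi.single r 1) := by
  ext i j
  simp [updateCol_apply, hg.eq_iff, Pi.single_apply, hf.eq_iff]

theorem det_one_updateCol_updateCol {m : Type*} [Fintype m] [DecidableEq m] {p₀ p₁ : m}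
    (hp : p₀ ≠ p₁) (u v : m → R) :
    (((1 : Matrix m m R).updateCol p₀ u).updateCol p₁ v).det = u p₀ * v p₁ - u p₁ * v p₀ := by
  let U : Matrix m (Fin 2) R := of fun i a => ![u, v] a i - (Pi.single (![p₀, p₁] a) 1 : m → R) i
  let V : Matrix (Fin 2) m R := (1 : Matrix m m R).submatrix ![p₀, p₁] id
  have hUV : ((1 : Matrix m m R).updateCol p₀ u).updateCol p₁ v = 1 + U * V := by
    ext i c
    simp only [U, V, add_apply, mul_apply, Fin.sum_univ_two, of_apply, submatrix_apply,
      updateCol_apply, one_apply, Pi.single_apply]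
    by_cases h1 : c = p₁ <;> by_cases h0 : c = p₀ <;> simp_all [eq_comm]
  have hVU : V * U = U.submatrix ![p₀, p₁] id := by
    rw [← submatrix_id_id U, ← submatrix_mul _ _ _ _ _ Function.bijective_id, Matrix.one_mul]
    rfl
  rw [hUV, det_one_add_mul_comm, hVU, det_fin_two]
  simp only [add_apply, submatrix_apply, id, U, of_apply, one_apply_eq, Fin.isValue, cons_val_zero,
    cons_val_one, cons_val_fin_one, Pi.single_eq_same, ne_eq, zero_ne_one, one_ne_zero,
    not_false_eq_true, one_apply_ne, Pi.single_eq_of_ne, hp, hp.symm, sub_zero, zero_add]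
  ring

/-- Jacobi's complementary minor theorem for `2 × 2` minors. -/
theorem det_submatrix_succAbove_succAbove_of_mul_eq_one {n : ℕ}
    {A B : Matrix (Fin (n + 2)) (Fin (n + 2)) R} (hAB : A * B = 1)
    (r₁ c₁ : Fin (n + 2)) (r₀ c₀ : Fin (n + 1)) :
    (A.submatrix (r₁.succAbove ∘ r₀.succAbove) (c₁.succAbove ∘ c₀.succAbove)).det =
      (-1) ^ (r₀ + c₀ + r₁ + c₁ : ℕ) * A.det *
        (B (c₁.succAbove c₀) (r₁.succAbove r₀) * B c₁ r₁ -
          B c₁ (r₁.succAbove r₀) * B (c₁.succAbove c₀) r₁) := by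
  let C := ((1 : Matrix _ _ R).updateCol (c₁.succAbove c₀) fun i => B i (r₁.succAbove r₀)).updateCol
    c₁ fun i => B i r₁
  have hcol (k : Fin (n + 2)) : (A *ᵥ fun i => B i k) = Pi.single k 1 := by
    ext i
    change (A * B) i k = _
    rw [hAB, one_apply, Pi.single_apply]
  have hAC : A * C = (A.updateCol (c₁.succAbove c₀) (Pi.single (r₁.succAbove r₀) 1)).updateCol c₁
      (Pi.single r₁ 1) := by
    simp only [C, mul_updateCol, Matrix.mul_one, hcol]
  have hdetAC : (A * C).det = (-1) ^ (r₀ + c₀ + r₁ + c₁ : ℕ) *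
      (A.submatrix (r₁.succAbove ∘ r₀.succAbove) (c₁.succAbove ∘ c₀.succAbove)).det := by
    rw [hAC, det_updateCol_single_one, submatrix_updateCol_single_one _
      Fin.succAbove_right_injective Fin.succAbove_right_injective, det_updateCol_single_one,
      submatrix_submatrix, ← mul_assoc, ← pow_add]
    ring_nf
  rw [det_mul, det_one_updateCol_updateCol (Fin.succAbove_ne c₁ c₀)] at hdetAC
  have hsq : ((-1 : R) ^ (r₀ + c₀ + r₁ + c₁ : ℕ)) ^ 2 = 1 := by
    rw [← pow_mul, pow_mul', neg_one_sq, one_pow]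
  linear_combination -(-1 : R) ^ (r₀ + c₀ + r₁ + c₁ : ℕ) * hdetAC -
    (A.submatrix (r₁.succAbove ∘ r₀.succAbove) (c₁.succAbove ∘ c₀.succAbove)).det * hsq

end Matrix

theorem Fin.val_succAbove {n : ℕ} (p : Fin (n + 1)) (i : Fin n) :
    (p.succAbove i : ℕ) = if (i : ℕ) < p then (i : ℕ) else i + 1 := by
  simp only [Fin.succAbove, Fin.lt_def, Fin.val_castSucc]
  split_ifs <;> rfl

theorem hh_zero : hh 0 = 1 := rfl

theorem hh_of_neg {n : ℤ} (h : n < 0) : hh n = 0 := by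
  cases n with
  | ofNat k => exact absurd h (by simp)
  | negSucc k => rfl

def hMatrix (N : ℕ) : Matrix (Fin N) (Fin N) SymF := Matrix.of fun a b => hh ((b : ℤ) - a)

theorem det_hMatrix (N : ℕ) : (hMatrix N).det = 1 := by
  rw [Matrix.det_of_isUpperTriangular (M := hMatrix N) fun a b hba =>
    hh_of_neg (by simp at hba ⊢; omega)]
  simp [hMatrix, hh_zero]

theorem ee_eq_det (n : ℕ) : ee n = (Matrix.of fun a c : Fin n => hh (1 + (c : ℤ) - a)).det := by
  simp [ee, schur]

theorem ee_zero : ee 0 = 1 := by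
  simp [ee_eq_det]

theorem det_submatrix_succ_succAbove_eq_ee (d : ℕ) (t : Fin (d + 1)) :
    ((Matrix.of fun a c : Fin (d + 1) => hh (1 + (c : ℤ) - a)).submatrix
      Fin.succ t.succAbove).det = ee (d - t) := by
  obtain ⟨k, hk⟩ : ∃ k, d = t + k := ⟨d - t, by omega⟩
  let eqv : Fin t ⊕ Fin k ≃ Fin d := finSumFinEquiv.trans (finCongr hk.symm)
  have hblocks : ((Matrix.of fun a c : Fin (d + 1) => hh (1 + (c : ℤ) - a)).submatrix
      Fin.succ t.succAbove).submatrix eqv eqv =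
        Matrix.fromBlocks (hMatrix t) (Matrix.of fun (a : Fin t) (c : Fin k) => hh (t + c + 1 - a))
          0 (Matrix.of fun a c : Fin k => hh (1 + (c : ℤ) - a)) := by
    refine Matrix.ext fun i j => ?_
    rcases i with a | a <;> rcases j with c | c <;>
      simp only [eqv, hMatrix, Equiv.coe_trans, Matrix.submatrix_apply, Function.comp_apply,
        finSumFinEquiv_apply_left, finSumFinEquiv_apply_right, finCongr_apply, Matrix.of_apply,
        Fin.val_succAbove, Fin.val_cast, Fin.val_castAdd, Fin.val_natAdd, Fin.is_lt,
        add_lt_iff_neg_left, not_lt_zero, ↓reduceIte, Fin.val_succ, Nat.cast_add, Nat.cast_one,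
        Matrix.fromBlocks_apply₁₁, Matrix.fromBlocks_apply₁₂, Matrix.fromBlocks_apply₂₁,
        Matrix.fromBlocks_apply₂₂, Matrix.zero_apply]
    case inr.inl => exact hh_of_neg (by have := c.isLt; omega)
    all_goals congr 1; ring
  rw [← Matrix.det_submatrix_equiv_self eqv, hblocks, Matrix.det_fromBlocks_zero₂₁, det_hMatrix,
    one_mul, ee_eq_det, show d - t = k by omega]

theorem ee_succ (d : ℕ) :
    ee (d + 1) = ∑ t ∈ range (d + 1), (-1) ^ t * hh (t + 1) * ee (d - t) := by
  rw [ee_eq_det, Matrix.det_succ_row_zero, ← Fin.sum_univ_eq_sum_range]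
  refine sum_congr rfl fun t _ => ?_
  rw [det_submatrix_succ_succAbove_eq_ee]
  simp [add_comm]

theorem sum_range_neg_one_pow_mul_hh_mul_ee (d : ℕ) :
    ∑ s ∈ range (d + 1), (-1) ^ s * hh s * ee (d - s) = if d = 0 then 1 else 0 := by
  cases d with
  | zero => simp [hh_zero, ee_zero]
  | succ d =>
    rw [sum_range_succ', Nat.sub_zero, ee_succ]
    simp [hh_zero, pow_succ]

def eeInt (n : ℤ) : SymF := if 0 ≤ n then ee n.toNat else 0

@[simp]
theorem eeInt_natCast (n : ℕ) : eeInt n = ee n := by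
  simp [eeInt]

theorem eeInt_of_neg {n : ℤ} (h : n < 0) : eeInt n = 0 := by
  simp [eeInt, not_le.mpr h]

def eMatrix (N : ℕ) : Matrix (Fin N) (Fin N) SymF :=
  Matrix.of fun a b => (-1) ^ (a + b : ℕ) * eeInt ((b : ℤ) - a)

theorem hMatrix_mul_eMatrix (N : ℕ) : hMatrix N * eMatrix N = 1 := by
  refine Matrix.ext fun a b => ?_
  let f : ℕ → SymF := fun j => hh ((j : ℤ) - a) * ((-1) ^ (j + b) * eeInt ((b : ℤ) - j))
  have hsupp : (hMatrix N * eMatrix N) a b = ∑ j ∈ Ico (a : ℕ) (b + 1), f j := by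
    change ∑ j : Fin N, f j = _
    rw [Fin.sum_univ_eq_sum_range f]
    refine (sum_subset (fun j hj => ?_) fun j _ hj => ?_).symm
    · simp only [mem_Ico, mem_range] at hj ⊢
      omega
    · simp only [mem_Ico, not_and_or, not_le, not_lt] at hj
      rcases hj with hj | hj
      · simp [f, hh_of_neg (show (j : ℤ) - a < 0 by omega)]
      · simp [f, eeInt_of_neg (show (b : ℤ) - j < 0 by omega)]
  rw [hsupp]
  rcases le_or_gt (a : ℕ) b with hab | hba
  · obtain ⟨d, hd⟩ := Nat.exists_eq_add_of_le hab
    have hterm : ∀ s ∈ range (d + 1),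
        f (a + s) = (-1) ^ (a + b : ℕ) * ((-1) ^ s * hh s * ee (d - s)) := by
      intro s hs
      have hsd : (b : ℤ) - (a + s : ℕ) = (d - s : ℕ) := by simp at hs; omega
      simp only [f]
      rw [hsd, eeInt_natCast, Nat.cast_add, add_sub_cancel_left]
      ring
    rw [sum_Ico_eq_sum_range, show (b : ℕ) + 1 - a = d + 1 by omega, sum_congr rfl hterm,
      ← mul_sum, sum_range_neg_one_pow_mul_hh_mul_ee]
    by_cases hd0 : d = 0
    · obtain rfl : a = b := Fin.ext (by omega)
      simp [hd0, Even.neg_one_pow ⟨(a : ℕ), rfl⟩]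
    · rw [if_neg hd0, mul_zero, Matrix.one_apply_ne (fun h => hd0 (by rw [h] at hd; omega))]
  · rw [Ico_eq_empty (by omega), sum_empty, Matrix.one_apply_ne (by omega)]

def jtMinor (x l : ℕ) (r : ℤ) : SymF :=
  eeInt x * eeInt (l - 1 - r) - eeInt (x - r - 1) * eeInt l

theorem jtMinor_of_le {x l : ℕ} {r : ℤ} (hx : x < l) (hr : l ≤ r) : jtMinor x l r = 0 := by
  rw [jtMinor, eeInt_of_neg (n := l - 1 - r) (by omega), eeInt_of_neg (n := x - r - 1) (by omega)]
  ring

theorem jtMinor_zero_left (l : ℕ) {r : ℤ} (hr : 0 ≤ r) : jtMinor 0 l r = eeInt (l - 1 - r) := by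
  rw [jtMinor, eeInt_natCast, ee_zero, eeInt_of_neg (n := ((0 : ℕ) : ℤ) - r - 1) (by omega)]
  ring

theorem jtMinor_neg_one (x l : ℕ) : jtMinor x l (-1) = 0 := by
  simp [jtMinor]

theorem det_submatrix_succ_succAbove_eq_jtMinor (m x n : ℕ) (hx : x < n + 1) (c : Fin (n + 1)) :
    ((Matrix.of fun i j : Fin (n + 1) =>
      hh (((if (i : ℕ) = 0 then m else if (i : ℕ) ≤ x then 2 else 1 : ℕ) : ℤ) + j - i)).submatrix
        Fin.succ c.succAbove).det = jtMinor x (n + 1) c := by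
  have hminor : (Matrix.of fun i j : Fin (n + 1) =>
      hh (((if (i : ℕ) = 0 then m else if (i : ℕ) ≤ x then 2 else 1 : ℕ) : ℤ) + j - i)).submatrix
        Fin.succ c.succAbove = (hMatrix (n + 2)).submatrix
          ((Fin.last (n + 1)).succAbove ∘ (⟨x, hx⟩ : Fin (n + 1)).succAbove)
          ((0 : Fin (n + 2)).succAbove ∘ c.succAbove) := by
    refine Matrix.ext fun i j => ?_
    simp only [hMatrix, Fin.val_eq_zero_iff, Nat.cast_ite, Nat.cast_ofNat, Nat.cast_one,
      Matrix.submatrix_apply, Matrix.of_apply, Fin.succ_ne_zero, ↓reduceIte, Fin.val_succ,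
      Order.add_one_le_iff, Fin.val_succAbove, Nat.cast_add, Fin.succAbove_last,
      Fin.succAbove_zero, Function.comp_apply, Fin.val_castSucc]
    congr 1
    split_ifs <;> omega
  rw [hminor, Matrix.det_submatrix_succAbove_succAbove_of_mul_eq_one (hMatrix_mul_eMatrix _),
    det_hMatrix]
  simp only [eMatrix, Matrix.of_apply, jtMinor, Fin.val_last, Fin.val_zero, Fin.zero_succAbove,
    Fin.val_succ, Fin.succAbove_last, Fin.castSucc_mk, Nat.cast_add, Nat.cast_one, Nat.cast_zero,
    add_zero, sub_zero, eeInt_natCast]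
  ring_nf
  simp only [pow_mul', neg_one_sq, one_pow, mul_one]

theorem schur_eq_sum_jtMinor (m x l N : ℕ) (hx : x < l) (hN : l ≤ N) :
    schur l (fun k => if (k : ℕ) = 0 then m else if (k : ℕ) ≤ x then 2 else 1) =
      ∑ r ∈ range N, (-1) ^ r * hh (m + r) * jtMinor x l r := by
  obtain ⟨n, rfl⟩ : ∃ n, l = n + 1 := ⟨l - 1, by omega⟩
  rw [← sum_subset (range_subset_range.mpr hN) fun r _ hr => by
    rw [jtMinor_of_le hx (by rw [mem_range] at hr; omega), mul_zero], ← Fin.sum_univ_eq_sum_range, schur,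
    Matrix.det_succ_row_zero]
  refine sum_congr rfl fun c _ => ?_
  rw [det_submatrix_succ_succAbove_eq_jtMinor m x n hx]
  simp

theorem schur_hook_eq_sum (m j N : ℕ) (hN : j + 1 ≤ N) :
    schur (j + 1) (fun k => if (k : ℕ) = 0 then m else 1) =
      ∑ r ∈ range N, (-1) ^ r * hh (m + r) * eeInt (j - r) := by
  rw [show (fun k : Fin (j + 1) => if (k : ℕ) = 0 then m else 1) =
      fun k : Fin (j + 1) => if (k : ℕ) = 0 then m else if (k : ℕ) ≤ 0 then 2 else 1 from
      funext fun k => by split_ifs <;> omega,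
    schur_eq_sum_jtMinor m 0 (j + 1) N (by omega) hN]
  refine sum_congr rfl fun r _ => ?_
  rw [jtMinor_zero_left _ (Nat.cast_nonneg r)]
  congr 2
  push_cast
  ring

theorem eeInt_mul_eeInt_eq_sum_sub_sum (i j : ℕ) {r : ℤ} (hr : 0 ≤ r) :
    eeInt i * eeInt (j - r) =
      ∑ x ∈ range (min i j + 1), jtMinor x (i + j + 1 - x) r -
        ∑ x ∈ range (min i (j + 1)), jtMinor x (i + j - x) (r - 1) := by
  let a : ℕ → SymF := fun x => eeInt x * eeInt (i + j - x - r)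
  let b : ℕ → SymF := fun x => eeInt (x - r - 1) * eeInt (i + j + 1 - x)
  have hR : ∀ x ∈ range (min i j + 1), jtMinor x (i + j + 1 - x) r = a x - b x := by
    intro x hx
    simp only [mem_range] at hx
    rw [jtMinor, show ((i + j + 1 - x : ℕ) : ℤ) - 1 - r = i + j - x - r by omega,
      show ((i + j + 1 - x : ℕ) : ℤ) = i + j + 1 - x by omega]
  have hQ : ∀ x ∈ range (min i (j + 1)), jtMinor x (i + j - x) (r - 1) = a x - b (x + 1) := by
    intro x hx
    simp only [mem_range] at hx
    rw [jtMinor, show ((i + j - x : ℕ) : ℤ) - 1 - (r - 1) = i + j - x - r by omega,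
      show (x : ℤ) - (r - 1) - 1 = ((x + 1 : ℕ) : ℤ) - r - 1 by push_cast; ring,
      show ((i + j - x : ℕ) : ℤ) = i + j + 1 - ((x + 1 : ℕ) : ℤ) by omega]
  have hb0 : b 0 = 0 := by
    simp only [b]
    rw [eeInt_of_neg (by omega), zero_mul]
  rw [sum_congr rfl hR, sum_congr rfl hQ]
  rcases le_or_gt i j with hij | hij
  · rw [min_eq_left hij, min_eq_left (by omega), sum_sub_distrib, sum_sub_distrib, sum_range_succ,
      sum_range_succ' b, hb0]
    simp only [a, show (i : ℤ) + j - i - r = j - r by ring]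
    ring
  · rw [min_eq_right hij.le, min_eq_right (by omega), ← sum_sub_distrib]
    simp only [sub_sub_sub_cancel_left]
    rw [sum_range_sub b, hb0]
    simp only [b, show ((j + 1 : ℕ) : ℤ) - r - 1 = j - r by push_cast; ring,
      show (i : ℤ) + j + 1 - (j + 1 : ℕ) = i by push_cast; ring]
    ring

theorem sum_range_neg_one_pow_mul_shift {R : Type*} [CommRing R] (f c : ℤ → R) (hc : c (-1) = 0)
    (m N : ℕ) :
    ∑ r ∈ range N, (-1) ^ r * f ((m + 1 : ℕ) + r) * c r =
      -∑ r ∈ range (N + 1), (-1) ^ r * f (m + r) * c (r - 1) := by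
  rw [sum_range_succ']
  simp [hc, pow_succ, add_assoc, add_comm (1 : ℤ)]

theorem stmt6_general (m i j : ℕ) :
    ee i * schur (j+1) (fun k => if (k : ℕ) = 0 then m else 1)
    = (∑ x ∈ Finset.range (min i (j+1)),
        schur (i + j - x)
          (fun k => if (k : ℕ) = 0 then m + 1 else if (k : ℕ) ≤ x then 2 else 1))
      + ∑ x ∈ Finset.range (min i j + 1),
        schur (i + j + 1 - x)
          (fun k => if (k : ℕ) = 0 then m else if (k : ℕ) ≤ x then 2 else 1) := by
  rw [schur_hook_eq_sum m j (i + j + 2) (by omega),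
    sum_congr rfl fun x hx => schur_eq_sum_jtMinor (m + 1) x (i + j - x) (i + j + 1)
      (by rw [mem_range] at hx; omega) (by omega),
    sum_congr rfl fun x hx => schur_eq_sum_jtMinor m x (i + j + 1 - x) (i + j + 2)
      (by rw [mem_range] at hx; omega) (by omega),
    sum_comm, sum_comm (s := range (min i j + 1))]
  simp_rw [← mul_sum]
  rw [sum_range_neg_one_pow_mul_shift hh
      (fun r => ∑ x ∈ range (min i (j + 1)), jtMinor x (i + j - x) r) (by simp [jtMinor_neg_one]),
    mul_sum, ← sum_neg_distrib, ← sum_add_distrib]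
  refine sum_congr rfl fun r _ => ?_
  rw [← eeInt_natCast i, mul_left_comm, eeInt_mul_eeInt_eq_sum_sub_sum i j (Nat.cast_nonneg r)]
  ring

/-- For `m ≥ 2` and `i, j ≥ 0`,
`e_i · s_{(m,1^j)} = ∑_{x=0}^{min(i-1,j)} s_{(m+1,2^x,1^{i+j-1-2x})}
  + ∑_{x=0}^{min(i,j)} s_{(m,2^x,1^{i+j-2x})}`
(the first sum being empty when `i = 0`). -/
theorem stmt6 (m i j : ℕ) (hm : 2 ≤ m) :
    ee i * schur (j+1) (fun k => if (k : ℕ) = 0 then m else 1)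
    = (∑ x ∈ Finset.range (min i (j+1)),
        schur (i + j - x)
          (fun k => if (k : ℕ) = 0 then m + 1 else if (k : ℕ) ≤ x then 2 else 1))
      + ∑ x ∈ Finset.range (min i j + 1),
        schur (i + j + 1 - x)
          (fun k => if (k : ℕ) = 0 then m else if (k : ℕ) ≤ x then 2 else 1) :=
  stmt6_general m i j
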